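/- arXiv:2411.12677 — 6 statements merged into one kernel-verified Lean document; each statement's English description precedes it below -/
import Mathlib

section
/- For every σ > 0 there exists a real constant K₀ = K₀(σ) > 2 with the following property: for all real numbers α, β, θ with α > 0 and |β| ≥ σ, and for every real K ≥ K₀, the function I_K(r) := ∫_r^{K·r} cos²(α·log s + θ)·s^{2β−1} ds satisfies I_K(K²·r) − 2·I_K(K·r) + I_K(r) > 0 for every r > 0. -/
open Complex

/-!
Since `cos² y = (1 + cos 2y) / 2`, the integrand is the real part of
`(s ^ (2β - 1) + e ^ (2iθ) s ^ (z - 1)) / 2` with `z = 2β + 2iα`, so `I_K(r) = Re (G (K r) - G r)`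
for an explicit combination `G` of the powers `s ^ w / w`. The second difference of `I_K` along
`r, K r, K² r` is the third difference of `G` along `r, …, K³ r`, to which `s ^ w` contributes
`r ^ w (K ^ w - 1) ^ 3 / w`. The radial term `w = 2β` is positive and dominates the oscillating
term `w = z`: with `ω = z log K` this is `|e ^ ω - 1| ^ 3 / |ω| < (e ^ (Re ω) - 1) ^ 3 / Re ω`,
which holds as soon as `Im ω ≠ 0` and `|Re ω| ≥ 16`.
-/

theorem seven_mul_sq_mul_exp_lt_sq_exp_sub_one {v : ℝ} (hv : 16 ≤ |v|) :
    7 * v ^ 2 * Real.exp v < (Real.exp v - 1) ^ 2 := by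
  have hquartic : |v| ^ 4 / 24 ≤ Real.exp |v| := by
    simpa [Nat.factorial] using Real.pow_div_factorial_le_exp _ (abs_nonneg v) 4
  have hsymm : Real.exp |v| ≤ Real.exp v + Real.exp (-v) := by
    rcases abs_cases v with ⟨h, -⟩ | ⟨h, -⟩ <;> rw [h] <;>
      linarith [Real.exp_pos v, Real.exp_pos (-v)]
  have hcosh : 7 * v ^ 2 < Real.exp v + Real.exp (-v) - 2 := by
    have h256 : 256 ≤ |v| ^ 2 := by nlinarith
    have h4 : |v| ^ 4 = |v| ^ 2 * |v| ^ 2 := by ring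
    rw [← sq_abs v]; nlinarith
  have hsq : (Real.exp v - 1) ^ 2 = Real.exp v * (Real.exp v + Real.exp (-v) - 2) := by
    rw [Real.exp_neg]; field_simp; ring
  rw [hsq, mul_comm _ (Real.exp v)]
  exact mul_lt_mul_of_pos_left hcosh (Real.exp_pos v)

theorem norm_cexp_sub_one_pow_three_div_lt {ω : ℂ} (him : ω.im ≠ 0) (hre : 16 ≤ |ω.re|) :
    ‖cexp ω - 1‖ ^ 3 / ‖ω‖ < (Real.exp ω.re - 1) ^ 3 / ω.re := by
  set v := ω.re
  set t := ω.im
  set E := Real.exp v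
  set c := 1 - Real.cos t
  set Q := (E - 1) ^ 2
  have hnorm : ‖cexp ω - 1‖ ^ 2 = Q + 2 * E * c := by
    rw [Complex.sq_norm, normSq_apply]
    simp only [sub_re, sub_im, exp_re, exp_im, one_re, one_im]
    linear_combination E ^ 2 * Real.sin_sq_add_cos_sq t
  have hω : ‖ω‖ ^ 2 = v ^ 2 + t ^ 2 := by rw [Complex.sq_norm, normSq_apply]; ring
  have hE : 0 < E := Real.exp_pos v
  have hc0 : 0 ≤ c := by linarith [Real.cos_le_one t]
  have hc2 : c ≤ 2 := by linarith [Real.neg_one_le_cos t]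
  have hct : 2 * c ≤ t ^ 2 := by linarith [Real.one_sub_sq_div_two_le_cos (x := t)]
  have ht : 0 < t ^ 2 := by positivity
  have hv : 1 ≤ v ^ 2 := by rw [← sq_abs v]; nlinarith
  have hQ : 7 * v ^ 2 * E < Q := seven_mul_sq_mul_exp_lt_sq_exp_sub_one hre
  -- `(Q + 2Ec)³ - Q³ = 2Ec (3Q² + 6QEc + 4E²c²)`, and `Q ≥ 4E`, `c ≤ 2` bound the cofactor by `7Q²`
  have hcofactor : 3 * Q ^ 2 + 6 * Q * E * c + 4 * E ^ 2 * c ^ 2 ≤ 7 * Q ^ 2 := by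
    have h4E : 4 * E ≤ Q := by nlinarith
    have hEc : E * c ≤ 2 * E := by nlinarith
    nlinarith [mul_le_mul_of_nonneg_left hEc (by positivity : 0 ≤ Q),
      mul_le_mul hEc hEc (by positivity) (by positivity)]
  have hsq : (Q + 2 * E * c) ^ 3 * v ^ 2 < Q ^ 3 * (v ^ 2 + t ^ 2) :=
    calc (Q + 2 * E * c) ^ 3 * v ^ 2
        = Q ^ 3 * v ^ 2
          + v ^ 2 * (E * (2 * c)) * (3 * Q ^ 2 + 6 * Q * E * c + 4 * E ^ 2 * c ^ 2) := by ring
      _ ≤ Q ^ 3 * v ^ 2 + v ^ 2 * (E * t ^ 2) * (7 * Q ^ 2) := by gcongr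
      _ = Q ^ 3 * v ^ 2 + 7 * v ^ 2 * E * (Q ^ 2 * t ^ 2) := by ring
      _ < Q ^ 3 * v ^ 2 + Q * (Q ^ 2 * t ^ 2) := by
          have : 0 < Q := by nlinarith
          gcongr
      _ = Q ^ 3 * (v ^ 2 + t ^ 2) := by ring
  have hpos : 0 < (E - 1) ^ 3 / v := by
    rcases lt_or_gt_of_ne (show v ≠ 0 by rintro h; norm_num [h] at hre) with hv0 | hv0
    · exact div_pos_of_neg_of_neg
        (Odd.pow_neg (by decide) (by linarith [Real.exp_lt_one_iff.mpr hv0])) hv0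
    · exact div_pos (pow_pos (by linarith [Real.one_lt_exp_iff.mpr hv0]) 3) hv0
  refine lt_of_pow_lt_pow_left₀ 2 hpos.le ?_
  rw [div_pow, div_pow, ← pow_mul, show 3 * 2 = 2 * 3 from rfl, pow_mul, hnorm, hω, ← pow_mul,
    show 3 * 2 = 2 * 3 from rfl, pow_mul, div_lt_div_iff₀ (by positivity) (by positivity)]
  linarith

theorem hasDerivAt_cexp_mul_log_div {w : ℂ} (hw : w ≠ 0) {s : ℝ} (hs : 0 < s) :
    HasDerivAt (fun s : ℝ => cexp (w * Real.log s) / w) (cexp (w * Real.log s) / s) s :=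
  ((((Real.hasDerivAt_log hs.ne').ofReal_comp.const_mul w).cexp).div_const w).congr_deriv
    (by push_cast; field_simp)

theorem cexp_mul_log_geom_third_diff (w : ℂ) {K r : ℝ} (hK : 0 < K) (hr : 0 < r) :
    cexp (w * Real.log (K * (K * (K * r)))) - 3 * cexp (w * Real.log (K * (K * r)))
        + 3 * cexp (w * Real.log (K * r)) - cexp (w * Real.log r) =
      cexp (w * Real.log r) * (cexp (w * Real.log K) - 1) ^ 3 := by
  simp only [Real.log_mul hK.ne' (by positivity : K * (K * r) ≠ 0),
    Real.log_mul hK.ne' (by positivity : K * r ≠ 0), Real.log_mul hK.ne' hr.ne']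
  push_cast
  simp only [mul_add, Complex.exp_add]
  ring

theorem cos_sq_mul_rpow_eq_re (α β θ : ℝ) {s : ℝ} (hs : 0 < s) :
    Real.cos (α * Real.log s + θ) ^ 2 * s ^ (2 * β - 1) =
      ((cexp (2 * β * Real.log s) / s
        + cexp (2 * θ * I) * (cexp ((2 * β + 2 * α * I) * Real.log s) / s)) / 2).re := by
  have hphase : cexp (2 * θ * I) * cexp ((2 * β + 2 * α * I) * Real.log s) =
      cexp (↑(2 * β * Real.log s) + ↑(2 * (α * Real.log s + θ)) * I) := by
    rw [← Complex.exp_add]; push_cast; ring_nf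
  have hrpow : s ^ (2 * β - 1) = Real.exp (2 * β * Real.log s) / s := by
    rw [Real.rpow_sub_one hs.ne', Real.rpow_def_of_pos hs, mul_comm]
  rw [mul_div_assoc', hphase, ← Complex.ofReal_ofNat, ← ofReal_mul, ← ofReal_mul, ← ofReal_exp,
    exp_add_mul_I, ← ofReal_exp, ← ofReal_cos, ← ofReal_sin]
  simp only [Complex.div_ofReal_re, add_re, mul_re, ofReal_re, ofReal_im, I_re, I_im, add_im]
  rw [hrpow, Real.cos_sq]
  ring_nf

noncomputable def primitiveCosSqRpow (α β θ s : ℝ) : ℂ :=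
  (cexp (2 * β * Real.log s) / (2 * β)
    + cexp (2 * θ * I) * (cexp ((2 * β + 2 * α * I) * Real.log s) / (2 * β + 2 * α * I))) / 2

theorem hasDerivAt_re_primitiveCosSqRpow (α θ : ℝ) {β : ℝ} (hβ : β ≠ 0) {s : ℝ} (hs : 0 < s) :
    HasDerivAt (fun s => (primitiveCosSqRpow α β θ s).re)
      (Real.cos (α * Real.log s + θ) ^ 2 * s ^ (2 * β - 1)) s := by
  have h2β : (2 * β : ℂ) ≠ 0 := by exact_mod_cast mul_ne_zero two_ne_zero hβ
  have hz : (2 * β + 2 * α * I : ℂ) ≠ 0 := fun h => h2β (by simpa using congrArg re h)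
  rw [cos_sq_mul_rpow_eq_re α β θ hs]
  exact reCLM.hasFDerivAt.comp_hasDerivAt s
    ((((hasDerivAt_cexp_mul_log_div h2β hs).add
      ((hasDerivAt_cexp_mul_log_div hz hs).const_mul _)).div_const 2))

theorem integral_cos_sq_mul_rpow (α θ : ℝ) {β : ℝ} (hβ : β ≠ 0) {a b : ℝ} (ha : 0 < a)
    (hb : 0 < b) :
    ∫ s in a..b, Real.cos (α * Real.log s + θ) ^ 2 * s ^ (2 * β - 1) =
      (primitiveCosSqRpow α β θ b - primitiveCosSqRpow α β θ a).re := by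
  have hpos : ∀ s ∈ Set.uIcc a b, 0 < s := fun s hs => (lt_min ha hb).trans_le hs.1
  rw [sub_re]
  refine intervalIntegral.integral_eq_sub_of_hasDerivAt
    (fun s hs => hasDerivAt_re_primitiveCosSqRpow α θ hβ (hpos s hs)) ?_
  apply ContinuousOn.intervalIntegrable
  intro s hs
  have := (hpos s hs).ne'
  apply ContinuousAt.continuousWithinAt
  fun_prop (disch := simp [this])

theorem primitiveCosSqRpow_geom_third_diff (α β θ : ℝ) {K r : ℝ} (hK : 0 < K) (hr : 0 < r) :
    primitiveCosSqRpow α β θ (K * (K * (K * r))) - 3 * primitiveCosSqRpow α β θ (K * (K * r))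
        + 3 * primitiveCosSqRpow α β θ (K * r) - primitiveCosSqRpow α β θ r =
      (cexp (2 * β * Real.log r) * (cexp (2 * β * Real.log K) - 1) ^ 3 / (2 * β)
        + cexp (2 * θ * I) * (cexp ((2 * β + 2 * α * I) * Real.log r)
          * (cexp ((2 * β + 2 * α * I) * Real.log K) - 1) ^ 3 / (2 * β + 2 * α * I))) / 2 := by
  unfold primitiveCosSqRpow
  linear_combination (1 / (2 * (2 * β : ℂ))) * cexp_mul_log_geom_third_diff (2 * β) hK hr
    + cexp (2 * θ * I) / 2 / (2 * β + 2 * α * I) *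
      cexp_mul_log_geom_third_diff (2 * β + 2 * α * I) hK hr

theorem re_primitiveCosSqRpow_geom_third_diff_pos {α β θ K r : ℝ} (hα : α ≠ 0) (hK : 1 < K)
    (hr : 0 < r) (hβK : 16 ≤ |2 * β * Real.log K|) :
    0 < (primitiveCosSqRpow α β θ (K * (K * (K * r))) - 3 * primitiveCosSqRpow α β θ (K * (K * r))
        + 3 * primitiveCosSqRpow α β θ (K * r) - primitiveCosSqRpow α β θ r).re := by
  rw [primitiveCosSqRpow_geom_third_diff α β θ (by linarith) hr]
  have hL : 0 < Real.log K := Real.log_pos hK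
  set L := Real.log K
  set A := Real.log r
  set z : ℂ := 2 * β + 2 * α * I
  set p := Real.exp (2 * β * A) * (Real.exp (2 * β * L) - 1) ^ 3 / (2 * β)
  have hradial : cexp (2 * β * A) * (cexp (2 * β * L) - 1) ^ 3 / (2 * β) = p := by
    simp only [p]; push_cast; ring
  have hkey : ‖cexp (z * L) - 1‖ ^ 3 / ‖z‖ < (Real.exp (2 * β * L) - 1) ^ 3 / (2 * β) := by
    have hβ : β ≠ 0 := by rintro rfl; norm_num at hβK
    have hz : ‖z‖ ≠ 0 := by simp [z, Complex.ext_iff, hβ]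
    have hre : (z * L).re = 2 * β * L := by simp [z]
    have h := norm_cexp_sub_one_pow_three_div_lt (ω := z * L) (by simp [z, hα, hL.ne'])
      (by rwa [hre])
    rw [hre, norm_mul, norm_real, Real.norm_of_nonneg hL.le] at h
    calc ‖cexp (z * L) - 1‖ ^ 3 / ‖z‖ = ‖cexp (z * L) - 1‖ ^ 3 / (‖z‖ * L) * L := by
          field_simp
      _ < (Real.exp (2 * β * L) - 1) ^ 3 / (2 * β * L) * L := mul_lt_mul_of_pos_right h hL
      _ = (Real.exp (2 * β * L) - 1) ^ 3 / (2 * β) := by field_simp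
  have hosc : ‖cexp (2 * θ * I) * (cexp (z * A) * (cexp (z * L) - 1) ^ 3 / z)‖ < p := by
    have hphase : ‖cexp (2 * θ * I)‖ = 1 := by simp [norm_exp]
    have hmod : ‖cexp (z * A)‖ = Real.exp (2 * β * A) := by simp [norm_exp, z]
    rw [norm_mul, hphase, one_mul, norm_div, norm_mul, hmod, norm_pow, mul_div_assoc]
    exact (mul_lt_mul_of_pos_left hkey (Real.exp_pos _)).trans_eq (mul_div_assoc ..).symm
  rw [hradial, div_ofNat_re, add_re, ofReal_re]
  apply half_pos
  linarith [(abs_le.mp (abs_re_le_norm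
    (cexp (2 * θ * I) * (cexp (z * A) * (cexp (z * L) - 1) ^ 3 / z)))).1]

/-- Three-circle (growth-rate monotonicity) inequality for the Fourier modes of Jacobi
fields corresponding to complex indicial roots: for every `σ > 0` there exists `K₀ > 2`
such that for all `α > 0`, `|β| ≥ σ`, `K ≥ K₀` the function
`I_K(r) = ∫_r^{Kr} cos²(α log s + θ) s^{2β-1} ds` satisfies
`I_K(K²r) - 2 I_K(Kr) + I_K(r) > 0` for every `r > 0`. -/
theorem three_circle_complex_roots :
    ∀ σ : ℝ, 0 < σ → ∃ K₀ : ℝ, 2 < K₀ ∧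
      ∀ α β θ K : ℝ, 0 < α → σ ≤ |β| → K₀ ≤ K →
        let I : ℝ → ℝ := fun r =>
          ∫ s in r..(K * r), Real.cos (α * Real.log s + θ) ^ 2 * s ^ (2 * β - 1)
        ∀ r : ℝ, 0 < r → I (K ^ 2 * r) - 2 * I (K * r) + I r > 0 := by
  intro σ hσ
  refine ⟨2 + Real.exp (8 / σ), by linarith [Real.exp_pos (8 / σ)], ?_⟩
  intro α β θ K hα hβ hK I r hr
  have hK1 : 1 < K := by linarith [Real.exp_pos (8 / σ)]
  have hlogK : 8 / σ < Real.log K := (Real.lt_log_iff_exp_lt (by linarith)).mpr (by linarith)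
  have hβK : 16 ≤ |2 * β * Real.log K| := by
    have : 8 ≤ σ * Real.log K := by rw [div_lt_iff₀ hσ] at hlogK; linarith
    rw [abs_mul, abs_mul, abs_two, abs_of_pos (Real.log_pos hK1)]
    nlinarith
  have hβ0 : β ≠ 0 := by rintro rfl; norm_num at hβK
  simp only [I]
  rw [show K ^ 2 * r = K * (K * r) by ring,
    integral_cos_sq_mul_rpow α θ hβ0 (by positivity) (by positivity),
    integral_cos_sq_mul_rpow α θ hβ0 (by positivity) (by positivity),
    integral_cos_sq_mul_rpow α θ hβ0 hr (by positivity)]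
  convert re_primitiveCosSqRpow_geom_third_diff_pos (θ := θ) hα.ne' hK1 hr hβK using 1
  simp only [sub_re, add_re, mul_re, re_ofNat, im_ofNat]
  ring
end

section
/- For every σ > 0 there exists a real constant K₀ = K₀(σ) > 0 with the following property: for all real numbers α′, for every real β′ ≥ 2σ, every real K′ ≥ K₀ and every r′ ∈ ℝ, one has ℑ̃_{K′}(r′ + 2K′) − 2·ℑ̃_{K′}(r′ + K′) + ℑ̃_{K′}(r′) > 0. -/
open MeasureTheory

/-!
Writing `w = β + iα`, the integrand is `Re (e^{βτ} + e^{wτ})`, and for `w ≠ 0` the second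
difference of `r ↦ ∫_r^{r+K} e^{wτ} dτ` with step `K` is `e^{wr} (e^{wK} - 1)³ / w`.
The real exponent contributes `e^{βr} (e^{βK} - 1)³ / β > 0`, and the complex one is strictly
smaller in modulus once `βK ≥ 16` and `α ≠ 0`: with `u = wK = x + iy`,
`|e^u - 1|² = (e^x - 1)² + 2e^x (1 - cos y)` exceeds `(e^x - 1)²` by at most `e^x y²`, a relative
error `O(y² e^{-x})`, whereas `|u|² / x² = 1 + y² / x²`. For `α = 0` the two contributions agree.
-/

section

open Complex

lemma integral_one_add_cos_mul_exp (α β a b : ℝ) :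
    ∫ τ in a..b, (1 + Real.cos (α * τ)) * Real.exp (β * τ)
      = (∫ τ in a..b, cexp (β * τ)).re + (∫ τ in a..b, cexp ((β + α * I) * τ)).re := by
  have hint : ∀ c : ℂ, IntervalIntegrable (fun τ : ℝ => cexp (c * τ)) volume a b :=
    fun c => (by fun_prop : Continuous fun τ : ℝ => cexp (c * τ)).intervalIntegrable a b
  have hpt : ∀ τ : ℝ, (1 + Real.cos (α * τ)) * Real.exp (β * τ)
      = (cexp (β * τ)).re + (cexp ((β + α * I) * τ)).re := by
    intro τ
    rw [show ((β : ℂ) + α * I) * τ = ↑(β * τ) + ↑(α * τ) * I by push_cast; ring, exp_add,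
      ← ofReal_exp, re_ofReal_mul, exp_ofReal_mul_I_re, ← ofReal_mul, ← ofReal_exp, ofReal_re]
    ring
  simp only [hpt]
  rw [intervalIntegral.integral_add (Continuous.intervalIntegrable (by fun_prop) a b)
    (Continuous.intervalIntegrable (by fun_prop) a b)]
  exact congrArg₂ (· + ·) (reCLM.intervalIntegral_comp_comm (hint _))
    (reCLM.intervalIntegral_comp_comm (hint _))

lemma integral_cexp_second_difference {w : ℂ} (hw : w ≠ 0) (K r : ℝ) :
    (∫ τ in (r + 2 * K)..(r + 2 * K + K), cexp (w * τ))
        - 2 * (∫ τ in (r + K)..(r + K + K), cexp (w * τ))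
        + ∫ τ in r..(r + K), cexp (w * τ)
      = cexp (w * r) * (cexp (w * K) - 1) ^ 3 / w := by
  simp only [integral_exp_mul_complex hw]
  push_cast
  simp only [mul_add, exp_add, two_mul]
  field_simp
  ring

lemma seven_mul_sq_add_six_lt_exp {x : ℝ} (hx : 16 ≤ x) : 7 * x ^ 2 + 6 < Real.exp x := by
  have h : x ^ 4 / 24 ≤ Real.exp x := by
    simpa [Nat.factorial] using Real.pow_div_factorial_le_exp x (by linarith) 4
  nlinarith [mul_le_mul_of_nonneg_left (pow_le_pow_left₀ (by norm_num) hx 2) (sq_nonneg x)]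

lemma add_pow_three_mul_sq_lt {E x θ q : ℝ} (hE : 7 * x ^ 2 + 6 < E) (hq : 0 ≤ q)
    (hq4 : q ≤ 4 * E) (hqθ : q ≤ E * θ ^ 2) (hθ : θ ≠ 0) :
    ((E - 1) ^ 2 + q) ^ 3 * x ^ 2 < ((E - 1) ^ 2) ^ 3 * (x ^ 2 + θ ^ 2) := by
  set D := (E - 1) ^ 2 with hD
  have hDq : q ≤ D := by nlinarith
  have hDx : 7 * E * x ^ 2 < D := by nlinarith
  have hD0 : 0 < D := by nlinarith
  have hθ2 : 0 < θ ^ 2 := by positivity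
  have hcube : (D + q) ^ 3 ≤ D ^ 3 + 7 * D ^ 2 * q := by
    nlinarith [mul_nonneg (mul_nonneg hq (sub_nonneg.2 hDq)) hD0.le,
      mul_nonneg (mul_nonneg hq (sub_nonneg.2 hDq)) hq]
  have hqx : 7 * q * x ^ 2 < D * θ ^ 2 := by
    calc 7 * q * x ^ 2 ≤ 7 * E * x ^ 2 * θ ^ 2 := by nlinarith [sq_nonneg x]
      _ < D * θ ^ 2 := mul_lt_mul_of_pos_right hDx hθ2
  calc (D + q) ^ 3 * x ^ 2 ≤ (D ^ 3 + 7 * D ^ 2 * q) * x ^ 2 :=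
        mul_le_mul_of_nonneg_right hcube (sq_nonneg x)
    _ < D ^ 3 * (x ^ 2 + θ ^ 2) := by nlinarith [mul_lt_mul_of_pos_left hqx (pow_pos hD0 2)]

lemma norm_cexp_sub_one_sq (u : ℂ) :
    ‖cexp u - 1‖ ^ 2 = (Real.exp u.re - 1) ^ 2 + 2 * Real.exp u.re * (1 - Real.cos u.im) := by
  rw [Complex.sq_norm, Complex.normSq_apply, sub_re, sub_im, exp_re, exp_im, one_re, one_im]
  linear_combination Real.exp u.re ^ 2 * Real.sin_sq_add_cos_sq u.im

lemma norm_cexp_sub_one_pow_three_mul_re_lt {u : ℂ} (hu : 16 ≤ u.re) (him : u.im ≠ 0) :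
    ‖cexp u - 1‖ ^ 3 * u.re < (Real.exp u.re - 1) ^ 3 * ‖u‖ := by
  have hE := seven_mul_sq_add_six_lt_exp hu
  have hcos := Real.one_sub_sq_div_two_le_cos (x := u.im)
  have hexp := Real.exp_pos u.re
  have hsq : (‖cexp u - 1‖ ^ 2) ^ 3 * u.re ^ 2 < ((Real.exp u.re - 1) ^ 2) ^ 3 * ‖u‖ ^ 2 := by
    rw [norm_cexp_sub_one_sq, Complex.sq_norm, Complex.normSq_apply, ← sq, ← sq]
    refine add_pow_three_mul_sq_lt hE ?_ ?_ ?_ him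
    · nlinarith [Real.cos_le_one u.im]
    · nlinarith [Real.neg_one_le_cos u.im]
    · nlinarith
  have hpos : 0 ≤ (Real.exp u.re - 1) ^ 3 * ‖u‖ := by
    have : 1 ≤ Real.exp u.re := Real.one_le_exp (by linarith)
    positivity
  refine lt_of_pow_lt_pow_left₀ 2 hpos ?_
  calc (‖cexp u - 1‖ ^ 3 * u.re) ^ 2 = (‖cexp u - 1‖ ^ 2) ^ 3 * u.re ^ 2 := by ring
    _ < ((Real.exp u.re - 1) ^ 2) ^ 3 * ‖u‖ ^ 2 := hsq
    _ = ((Real.exp u.re - 1) ^ 3 * ‖u‖) ^ 2 := by ring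

lemma re_add_re_second_difference_pos {α β K : ℝ} (hK : 0 < K) (hβK : 16 ≤ β * K) (r : ℝ) :
    0 < (cexp (β * r) * (cexp (β * K) - 1) ^ 3 / β).re
      + (cexp ((β + α * I) * r) * (cexp ((β + α * I) * K) - 1) ^ 3 / (β + α * I)).re := by
  have hβ : 0 < β := pos_of_mul_pos_left (by linarith) hK.le
  set R := Real.exp (β * r) * (Real.exp (β * K) - 1) ^ 3 / β with hR
  have hRre : (cexp (β * r) * (cexp (β * K) - 1) ^ 3 / β).re = R := by
    rw [hR]; norm_cast
  have hRpos : 0 < R := by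
    have : 0 < Real.exp (β * K) - 1 := sub_pos.2 (Real.one_lt_exp_iff.2 (by positivity))
    positivity
  rw [hRre]
  rcases eq_or_ne α 0 with rfl | hα
  · simp only [ofReal_zero, zero_mul, add_zero, hRre]
    linarith
  set w : ℂ := β + α * I
  set F := cexp (w * r) * (cexp (w * K) - 1) ^ 3 / w
  have hnorm : ‖F‖ = Real.exp (β * r) * ‖cexp (w * K) - 1‖ ^ 3 / ‖w‖ := by
    simp [F, w, norm_exp]
  have hwK : (w * K).re = β * K := by simp [w]
  have hkey := norm_cexp_sub_one_pow_three_mul_re_lt (u := w * K) (hwK ▸ hβK)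
    (by simpa [w] using mul_ne_zero hα hK.ne')
  rw [hwK, norm_mul, norm_real, Real.norm_of_nonneg hK.le] at hkey
  have hw : 0 < ‖w‖ := norm_pos_iff.2 (fun h => by simpa [w, hβ.ne'] using congrArg re h)
  have hlt : ‖F‖ < R := by
    rw [hnorm, hR, div_lt_div_iff₀ hw hβ]
    have := Real.exp_pos (β * r)
    nlinarith
  linarith [neg_abs_le F.re, abs_re_le_norm F]

end

/-- Logarithmic-variable reformulation of the three-circle inequality for complex
indicial roots: for every `σ > 0` there exists `K₀ > 0` such that for all `α'`,
all `β' ≥ 2σ`, all `K' ≥ K₀` and every `r' ∈ ℝ`, setting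
`J(r') = ∫_{r'}^{r'+K'} (1 + cos(α'τ)) e^{β'τ} dτ`, one has
`J(r' + 2K') - 2 J(r' + K') + J(r') > 0`. -/
theorem three_circle_log_variable :
    ∀ σ : ℝ, 0 < σ → ∃ K₀ : ℝ, 0 < K₀ ∧
      ∀ α' β' K' : ℝ, 2 * σ ≤ β' → K₀ ≤ K' →
        let J : ℝ → ℝ := fun r' =>
          ∫ τ in r'..(r' + K'), (1 + Real.cos (α' * τ)) * Real.exp (β' * τ)
        ∀ r' : ℝ, J (r' + 2 * K') - 2 * J (r' + K') + J r' > 0 := by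
  intro σ hσ
  refine ⟨8 / σ, by positivity, ?_⟩
  intro α' β' K' hβ' hK' J r'
  have hK : 0 < K' := (by positivity : 0 < 8 / σ).trans_le hK'
  have hβK : 16 ≤ β' * K' :=
    calc (16 : ℝ) = 2 * σ * (8 / σ) := by field_simp; ring
      _ ≤ β' * K' := mul_le_mul hβ' hK' (by positivity) (by linarith)
  have hβ : (β' : ℂ) ≠ 0 := Complex.ofReal_ne_zero.2 (by linarith)
  have hw : (β' + α' * Complex.I : ℂ) ≠ 0 := fun h => hβ (by simpa using congrArg Complex.re h)
  have hpos := re_add_re_second_difference_pos (α := α') hK hβK r'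
  rw [← integral_cexp_second_difference hβ, ← integral_cexp_second_difference hw] at hpos
  simp only [J, integral_one_add_cos_mul_exp]
  simp only [Complex.add_re, Complex.sub_re, Complex.mul_re, Complex.re_ofNat, Complex.im_ofNat,
    zero_mul, sub_zero] at hpos
  linarith
end

section
/- Let α′, β′, K′, r′ be real numbers with β′ ≠ 0, and set β″ := β′ + i·α′ ∈ ℂ (so β″ ≠ 0). Then ℑ̃_{K′}(r′ + 2K′) − 2·ℑ̃_{K′}(r′ + K′) + ℑ̃_{K′}(r′) = e^{β′·r′}·(e^{β′·K′} − 1)³ / β′ + Re( e^{β″·r′}·(e^{β″·K′} − 1)³ / β″ ), where e^{β″·r′} and e^{β″·K′} are complex exponentials and Re denotes the real part. -/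
open MeasureTheory

lemma integral_exp_mul_real {β : ℝ} (hβ : β ≠ 0) (a b : ℝ) :
    (∫ x in a..b, Real.exp (β * x)) = (Real.exp (β * b) - Real.exp (β * a)) / β := by
  have D : ∀ x : ℝ, HasDerivAt (fun y : ℝ => Real.exp (β * y) / β) (Real.exp (β * x)) x := by
    intro x
    have h : HasDerivAt (fun y : ℝ => β * y) β x := by
      simpa using (hasDerivAt_id x).const_mul β
    simpa [mul_div_cancel_right₀ _ hβ] using h.exp.div_const β
  rw [intervalIntegral.integral_deriv_eq_sub' _ (funext fun x => (D x).deriv)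
    (fun x _ => (D x).differentiableAt)]
  · ring
  · fun_prop

lemma second_diff_field {F : Type*} [Field F] (x y b : F) (hb : b ≠ 0) :
    (x * y * y * y - x * y * y) / b - 2 * ((x * y * y - x * y) / b) + (x * y - x) / b
      = x * (y - 1) ^ 3 / b := by
  field_simp
  ring

/-- Closed-form expression for the second difference of
`J(r') = ∫_{r'}^{r'+K'} (1 + cos(α'τ)) e^{β'τ} dτ` at scale `K'`, via real and
complex exponentials, where `β'' = β' + i α' ∈ ℂ`. -/
theorem second_difference_closed_form (α' β' K' r' : ℝ) (hβ : β' ≠ 0) :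
    let J : ℝ → ℝ := fun r =>
      ∫ τ in r..(r + K'), (1 + Real.cos (α' * τ)) * Real.exp (β' * τ)
    let β'' : ℂ := (β' : ℂ) + Complex.I * (α' : ℂ)
    J (r' + 2 * K') - 2 * J (r' + K') + J r'
      = Real.exp (β' * r') * (Real.exp (β' * K') - 1) ^ 3 / β'
        + (Complex.exp (β'' * (r' : ℂ)) * (Complex.exp (β'' * (K' : ℂ)) - 1) ^ 3 / β'').re := by
  intro J β''
  have hβ'' : β'' ≠ 0 := by
    intro h
    have := congrArg Complex.re h
    simp [β''] at this
    exact hβ this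
  have hcont : Continuous fun τ : ℝ => Complex.exp (β'' * τ) :=
    Complex.continuous_exp.comp (continuous_const.mul Complex.continuous_ofReal)
  have hJ : ∀ r : ℝ, J r = (Real.exp (β' * (r + K')) - Real.exp (β' * r)) / β'
      + ((Complex.exp (β'' * ((r : ℝ) + K' : ℝ)) - Complex.exp (β'' * (r : ℝ))) / β'').re := by
    intro r
    have h1 : ∀ τ : ℝ, (1 + Real.cos (α' * τ)) * Real.exp (β' * τ)
        = Real.exp (β' * τ) + (Complex.exp (β'' * τ)).re := by
      intro τ
      have hz : (Complex.exp (β'' * τ)).re = Real.exp (β' * τ) * Real.cos (α' * τ) := by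
        rw [Complex.exp_re]
        congr 1
        · congr 1
          simp [β'', Complex.add_re, Complex.mul_re]
        · congr 1
          simp [β'', Complex.add_im, Complex.mul_im]
      rw [hz]; ring
    have : J r = ∫ τ in r..(r + K'),
        (Real.exp (β' * τ) + (Complex.exp (β'' * τ)).re) := by
      simp only [J]
      exact intervalIntegral.integral_congr (fun τ _ => h1 τ)
    rw [this, intervalIntegral.integral_add
      ((by fun_prop : Continuous fun τ : ℝ => Real.exp (β' * τ)).intervalIntegrable _ _)
      ((by fun_prop : Continuous fun τ : ℝ => (Complex.exp (β'' * τ)).re).intervalIntegrable _ _)]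
    congr 1
    · exact integral_exp_mul_real hβ _ _
    · have h2 := ContinuousLinearMap.intervalIntegral_comp_comm Complex.reCLM
        ((hcont.intervalIntegrable r (r + K') : IntervalIntegrable _ MeasureTheory.volume _ _))
      rw [integral_exp_mul_complex hβ''] at h2
      simp only [Complex.reCLM_apply] at h2
      exact h2
  rw [hJ, hJ, hJ]
  set x := Real.exp (β' * r') with hxdef
  set y := Real.exp (β' * K') with hydef
  set z := Complex.exp (β'' * (r' : ℂ)) with hzdef
  set w := Complex.exp (β'' * (K' : ℂ)) with hwdef
  have e3 : Real.exp (β' * (r' + 2 * K' + K')) = x * y * y * y := by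
    rw [hxdef, hydef, ← Real.exp_add, ← Real.exp_add, ← Real.exp_add]
    congr 1; ring
  have e2 : Real.exp (β' * (r' + 2 * K')) = x * y * y := by
    rw [hxdef, hydef, ← Real.exp_add, ← Real.exp_add]
    congr 1; ring
  have e2' : Real.exp (β' * (r' + K' + K')) = x * y * y := by
    rw [hxdef, hydef, ← Real.exp_add, ← Real.exp_add]
    congr 1; ring
  have e1 : Real.exp (β' * (r' + K')) = x * y := by
    rw [hxdef, hydef, ← Real.exp_add]
    congr 1; ring
  have c3 : Complex.exp (β'' * ((r' + 2 * K' + K' : ℝ) : ℂ)) = z * w * w * w := by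
    rw [hzdef, hwdef, ← Complex.exp_add, ← Complex.exp_add, ← Complex.exp_add]
    congr 1; push_cast; ring
  have c2 : Complex.exp (β'' * ((r' + 2 * K' : ℝ) : ℂ)) = z * w * w := by
    rw [hzdef, hwdef, ← Complex.exp_add, ← Complex.exp_add]
    congr 1; push_cast; ring
  have c2' : Complex.exp (β'' * ((r' + K' + K' : ℝ) : ℂ)) = z * w * w := by
    rw [hzdef, hwdef, ← Complex.exp_add, ← Complex.exp_add]
    congr 1; push_cast; ring
  have c1 : Complex.exp (β'' * ((r' + K' : ℝ) : ℂ)) = z * w := by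
    rw [hzdef, hwdef, ← Complex.exp_add]
    congr 1; push_cast; ring
  rw [e3, e2, e2', e1, c3, c2, c2', c1]
  have hR := second_diff_field x y β' hβ
  have hC := second_diff_field z w β'' hβ''
  have hre : ((z * w * w * w - z * w * w) / β'').re - 2 * ((z * w * w - z * w) / β'').re
      + ((z * w - z) / β'').re = (z * (w - 1) ^ 3 / β'').re := by
    rw [← hC]
    simp [Complex.sub_re, Complex.add_re, Complex.mul_re]
  linarith [hR, hre]
end

section
/- For every σ > 0 there exists a real constant K₀ = K₀(σ) > 0 with the following property: for all real numbers α′ ≠ 0, every real β′ ≥ 2σ and every real K′ ≥ K₀, one has ( |e^{β′·K′} − e^{−i·α′·K′}| / (e^{β′·K′} − 1) )⁶ < 1 + (α′/β′)², where |·| denotes the complex absolute value and e^{−i·α′·K′} is the complex exponential. Equivalently, setting β″ := β′ + i·α′, the sixth power of the ratio is strictly less than (|β″|/β′)². -/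
/-!
Write `x = β'K'`, `E = e^x`, `θ = α'K'` and `s = (α'/β')²`, so that `θ² = s x²`. Since
`|E - e^{-iθ}|² = (E - 1)² + 2E(1 - cos θ) ≤ (E - 1)² + Eθ²`, the squared ratio is at most
`1 + s t` with `t = x²E/(E - 1)² → 0`; once `t < 1/7`, cubing costs at most a factor `7` when
`s < 1`. When `s ≥ 1` the trivial bound `|E - e^{-iθ}| ≤ E + 1` suffices, because
`(E + 1)/(E - 1) → 1`.
-/

open Filter Topology Real

lemma cube_lt_one_add_of_le (r s t c : ℝ) (hr : 0 ≤ r) (hs : 0 < s) (ht₀ : 0 ≤ t)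
    (ht : t < 1 / 7) (hrt : r ≤ 1 + s * t) (hrc : r ≤ c ^ 2) (hc : c ^ 6 < 2) :
    r ^ 3 < 1 + s := by
  rcases lt_or_ge s 1 with hs1 | hs1
  · have hst₀ : 0 ≤ s * t := by positivity
    have hst : s * t ≤ 1 := by nlinarith
    calc r ^ 3 ≤ (1 + s * t) ^ 3 := by gcongr
      _ ≤ 1 + 7 * (s * t) := by nlinarith [mul_le_mul_of_nonneg_left hst hst₀]
      _ < 1 + s := by nlinarith
  · calc r ^ 3 ≤ (c ^ 2) ^ 3 := by gcongr
      _ = c ^ 6 := by ring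
      _ < 1 + s := by linarith

lemma norm_ofReal_sub_exp_mul_I_sq (E θ : ℝ) :
    ‖(E : ℂ) - Complex.exp (θ * Complex.I)‖ ^ 2 = (E - 1) ^ 2 + 2 * E * (1 - cos θ) := by
  rw [Complex.sq_norm, Complex.normSq_apply, Complex.exp_mul_I]
  simp only [Complex.sub_re, Complex.sub_im, Complex.ofReal_re, Complex.ofReal_im,
    Complex.add_re, Complex.add_im, Complex.mul_re, Complex.mul_im, Complex.I_re, Complex.I_im,
    ← Complex.ofReal_cos, ← Complex.ofReal_sin]
  nlinarith [sin_sq_add_cos_sq θ]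

lemma norm_ofReal_sub_exp_mul_I_div_sq_le {E : ℝ} (hE : 1 < E) (θ : ℝ) :
    (‖(E : ℂ) - Complex.exp (θ * Complex.I)‖ / (E - 1)) ^ 2
      ≤ 1 + θ ^ 2 * E / (E - 1) ^ 2 := by
  have hD : 0 < E - 1 := by linarith
  have hcos : 1 - θ ^ 2 / 2 ≤ cos θ := one_sub_sq_div_two_le_cos
  rw [div_pow, norm_ofReal_sub_exp_mul_I_sq, div_le_iff₀ (by positivity), add_mul,
    div_mul_cancel₀ _ (by positivity)]
  nlinarith

lemma norm_ofReal_sub_exp_mul_I_div_le {E : ℝ} (hE : 1 < E) (θ : ℝ) :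
    ‖(E : ℂ) - Complex.exp (θ * Complex.I)‖ / (E - 1) ≤ (E + 1) / (E - 1) := by
  gcongr
  calc ‖(E : ℂ) - Complex.exp (θ * Complex.I)‖
      ≤ ‖(E : ℂ)‖ + ‖Complex.exp (θ * Complex.I)‖ := norm_sub_le _ _
    _ = E + 1 := by rw [Complex.norm_exp_ofReal_mul_I, Complex.norm_of_nonneg (by linarith)]

lemma tendsto_sq_mul_exp_div_exp_sub_one_sq :
    Tendsto (fun x => x ^ 2 * exp x / (exp x - 1) ^ 2) atTop (𝓝 0) := by
  have hnum := tendsto_pow_mul_exp_neg_atTop_nhds_zero 2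
  have hden : Tendsto (fun x => (1 - exp (-x)) ^ 2) atTop (𝓝 1) := by
    simpa using ((tendsto_const_nhds (x := (1 : ℝ))).sub tendsto_exp_neg_atTop_nhds_zero).pow 2
  have := hnum.div hden one_ne_zero
  rw [zero_div] at this
  refine this.congr' ?_
  filter_upwards [eventually_gt_atTop 0] with x hx
  have : exp x - 1 ≠ 0 := (sub_pos.2 (one_lt_exp_iff.2 hx)).ne'
  simp only [Pi.div_apply, exp_neg]
  field_simp

lemma tendsto_exp_add_one_div_exp_sub_one :
    Tendsto (fun x => (exp x + 1) / (exp x - 1)) atTop (𝓝 1) := by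
  have h := (tendsto_const_nhds (x := (1 : ℝ))).add tendsto_exp_neg_atTop_nhds_zero
  have h' := (tendsto_const_nhds (x := (1 : ℝ))).sub tendsto_exp_neg_atTop_nhds_zero
  have := h.div h' (by norm_num)
  rw [add_zero, sub_zero, div_one] at this
  refine this.congr' ?_
  filter_upwards [eventually_gt_atTop 0] with x hx
  have : exp x - 1 ≠ 0 := (sub_pos.2 (one_lt_exp_iff.2 hx)).ne'
  simp only [Pi.div_apply, exp_neg]
  field_simp

/-- The key modulus-ratio estimate in the proof of the three-circle inequality for
complex indicial roots: for every `σ > 0` there exists `K₀ > 0` such that for all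
`α' ≠ 0`, `β' ≥ 2σ` and `K' ≥ K₀`,
`(|e^{β'K'} - e^{-iα'K'}| / (e^{β'K'} - 1))⁶ < 1 + (α'/β')²`. -/
theorem modulus_ratio_estimate :
    ∀ σ : ℝ, 0 < σ → ∃ K₀ : ℝ, 0 < K₀ ∧
      ∀ α' β' K' : ℝ, α' ≠ 0 → 2 * σ ≤ β' → K₀ ≤ K' →
        (‖((Real.exp (β' * K') : ℂ)
              - Complex.exp (-(Complex.I * (α' : ℂ) * (K' : ℂ))))‖ /
            (Real.exp (β' * K') - 1)) ^ 6
          < 1 + (α' / β') ^ 2 := by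
  intro σ hσ
  have ht := tendsto_sq_mul_exp_div_exp_sub_one_sq.eventually
    (gt_mem_nhds (by norm_num : (0 : ℝ) < 1 / 7))
  have hc := (tendsto_exp_add_one_div_exp_sub_one.pow 6).eventually
    (gt_mem_nhds (by norm_num : (1 : ℝ) ^ 6 < 2))
  obtain ⟨X, hX⟩ := eventually_atTop.1 (ht.and hc)
  refine ⟨max X 1 / (2 * σ), by positivity, fun α' β' K' hα hβ hK => ?_⟩
  have hβ₀ : 0 < β' := by linarith
  have hx : max X 1 ≤ β' * K' := by
    calc max X 1 = 2 * σ * (max X 1 / (2 * σ)) := by field_simp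
      _ ≤ β' * K' := by gcongr
  obtain ⟨ht, hc⟩ := hX _ (le_of_max_le_left hx)
  have hE : 1 < exp (β' * K') := one_lt_exp_iff.2 (by linarith [le_max_right X 1])
  have harg :
      -(Complex.I * (α' : ℂ) * (K' : ℂ)) = ((-(α' * K') : ℝ) : ℂ) * Complex.I := by
    push_cast; ring
  have hθ : (-(α' * K')) ^ 2 * exp (β' * K') / (exp (β' * K') - 1) ^ 2
      = (α' / β') ^ 2 * ((β' * K') ^ 2 * exp (β' * K') / (exp (β' * K') - 1) ^ 2) := by
    field_simp
  rw [harg, show ∀ q : ℝ, q ^ 6 = (q ^ 2) ^ 3 by intro q; ring]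
  exact cube_lt_one_add_of_le _ _ _ _ (sq_nonneg _) (by positivity) (by positivity) ht
    (hθ ▸ norm_ofReal_sub_exp_mul_I_div_sq_le hE _)
    (pow_le_pow_left₀ (by positivity) (norm_ofReal_sub_exp_mul_I_div_le hE _) 2) hc
end

section
/- In the nested-metric-space setting, suppose in addition that X_∞ is dense in (X_k, d_k) for every k ≥ k₀, and that G ⊆ X_{k₀} is an open subset of the metric space (X_{k₀}, d_{k₀}) such that G ∩ X_k is dense in (X_k, d_k) for every k ≥ k₀. Then G ∩ X_∞ is an open and dense subset of the metric space (X_∞, d_∞). -/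
/-!
The `k₀`-th term of `d∞` gives `2⁻¹ ^ k₀ · φ (d k₀) ≤ d∞` with `φ t = t / (1 + t)` strictly
increasing, so every `d k₀`-ball around a point of `G` contains a `d∞`-ball: `G ∩ X∞` is open.
For density, `d∞ x y` is at most `2 d_N(x, y)` plus the geometric tail `2 · 2⁻¹ ^ N`. Given
`x ∈ X∞`, approximate it in `d_N` by `z ∈ G ∩ X_N`, then approximate `z` in `d_N` by `y ∈ X∞`;
as `d k₀ ≤ d_N` and `G` is `d k₀`-open, `y` stays in `G` once it is close enough to `z`.
-/

lemma div_one_add_self_le_one {t : ℝ} (ht : 0 ≤ t) : t / (1 + t) ≤ 1 :=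
  div_le_one_of_le₀ (by linarith) (by linarith)

lemma div_one_add_self_le_self {t : ℝ} (ht : 0 ≤ t) : t / (1 + t) ≤ t :=
  div_le_self ht (by linarith)

lemma div_one_add_self_lt_div_one_add_self_iff {s t : ℝ} (hs : 0 ≤ s) (ht : 0 ≤ t) :
    s / (1 + s) < t / (1 + t) ↔ s < t := by
  rw [div_lt_div_iff₀ (by linarith) (by linarith)]
  constructor <;> intro h <;> linarith

section GeometricWeights

variable {a : ℕ → ℝ}

lemma summable_inv_two_pow_mul (ha0 : ∀ k, 0 ≤ a k) (ha1 : ∀ k, a k ≤ 1) :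
    Summable fun k => (2 : ℝ)⁻¹ ^ k * a k :=
  .of_nonneg_of_le (fun k => mul_nonneg (by positivity) (ha0 k))
    (fun k => mul_le_of_le_one_right (by positivity) (ha1 k))
    (summable_geometric_of_lt_one (by norm_num) (by norm_num))

lemma inv_two_pow_mul_le_tsum (ha0 : ∀ k, 0 ≤ a k) (ha1 : ∀ k, a k ≤ 1) (k : ℕ) :
    (2 : ℝ)⁻¹ ^ k * a k ≤ ∑' j, (2 : ℝ)⁻¹ ^ j * a j :=
  (summable_inv_two_pow_mul ha0 ha1).le_tsum k
    fun j _ => mul_nonneg (by positivity) (ha0 j)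

lemma tsum_inv_two_pow_mul_le (ha0 : ∀ k, 0 ≤ a k) (ha1 : ∀ k, a k ≤ 1) {D : ℝ} (hD : 0 ≤ D)
    {N : ℕ} (haD : ∀ k < N, a k ≤ D) :
    ∑' k, (2 : ℝ)⁻¹ ^ k * a k ≤ 2 * D + 2 * 2⁻¹ ^ N := by
  have hgeom : Summable fun k : ℕ => (2 : ℝ)⁻¹ ^ k :=
    summable_geometric_of_lt_one (by norm_num) (by norm_num)
  have htail : Summable fun k => if N ≤ k then (2 : ℝ)⁻¹ ^ k else 0 :=
    .of_nonneg_of_le (fun k => by split_ifs <;> positivity)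
      (fun k => by split_ifs <;> simp) hgeom
  have hterm : ∀ k, (2 : ℝ)⁻¹ ^ k * a k ≤
      (2 : ℝ)⁻¹ ^ k * D + if N ≤ k then (2 : ℝ)⁻¹ ^ k else 0 := by
    intro k
    split_ifs with hk
    · linarith [mul_le_of_le_one_right (by positivity : (0 : ℝ) ≤ 2⁻¹ ^ k) (ha1 k),
        mul_nonneg (by positivity : (0 : ℝ) ≤ 2⁻¹ ^ k) hD]
    · rw [add_zero]
      exact mul_le_mul_of_nonneg_left (haD k (not_le.mp hk)) (by positivity)
  calc ∑' k, (2 : ℝ)⁻¹ ^ k * a k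
      ≤ ∑' k, ((2 : ℝ)⁻¹ ^ k * D + if N ≤ k then (2 : ℝ)⁻¹ ^ k else 0) :=
        (summable_inv_two_pow_mul ha0 ha1).tsum_le_tsum hterm ((hgeom.mul_right D).add htail)
    _ = 2 * D + 2 * 2⁻¹ ^ N := by
      rw [(hgeom.mul_right D).tsum_add htail, tsum_mul_right, tsum_geometric_inv_two,
        tsum_geometric_inv_two_ge]

end GeometricWeights

section NestedMetric

variable {X : Type*} {k₀ : ℕ} {Xs : ℕ → Set X} {d : ℕ → X → X → ℝ}

noncomputable def boundedDist (k₀ : ℕ) (d : ℕ → X → X → ℝ) (x y : X) (k : ℕ) : ℝ :=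
  if k₀ ≤ k then d k x y / (1 + d k x y) else 0

lemma dist_le_of_le (hnested : ∀ k, k₀ ≤ k → Xs (k + 1) ⊆ Xs k)
    (hmono : ∀ k, k₀ ≤ k → ∀ x ∈ Xs (k + 1), ∀ y ∈ Xs (k + 1), d k x y ≤ d (k + 1) x y)
    {j k : ℕ} (hj : k₀ ≤ j) (hjk : j ≤ k) {x y : X} (hx : x ∈ Xs k) (hy : y ∈ Xs k) :
    d j x y ≤ d k x y := by
  induction k, hjk using Nat.le_induction with
  | base => exact le_rfl
  | succ k hk ih =>
    have hk₀ : k₀ ≤ k := hj.trans hk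
    exact (ih (hnested k hk₀ hx) (hnested k hk₀ hy)).trans (hmono k hk₀ x hx y hy)

lemma exists_mem_inter_dist_lt {G : Set X}
    (hnested : ∀ k, k₀ ≤ k → Xs (k + 1) ⊆ Xs k)
    (htri : ∀ k, k₀ ≤ k → ∀ x ∈ Xs k, ∀ y ∈ Xs k, ∀ z ∈ Xs k,
      d k x z ≤ d k x y + d k y z)
    (hmono : ∀ k, k₀ ≤ k → ∀ x ∈ Xs (k + 1), ∀ y ∈ Xs (k + 1), d k x y ≤ d (k + 1) x y)
    (hXinfDense : ∀ k, k₀ ≤ k → ∀ x ∈ Xs k, ∀ ε : ℝ, 0 < ε →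
      ∃ y ∈ {x | ∀ j, k₀ ≤ j → x ∈ Xs j}, d k x y < ε)
    (hGopen : ∀ x ∈ G, ∃ ε : ℝ, 0 < ε ∧ ∀ y ∈ Xs k₀, d k₀ x y < ε → y ∈ G)
    (hGdense : ∀ k, k₀ ≤ k → ∀ x ∈ Xs k, ∀ ε : ℝ, 0 < ε → ∃ y ∈ G ∩ Xs k, d k x y < ε)
    {N : ℕ} (hN : k₀ ≤ N) {x : X} (hx : x ∈ Xs N) {δ : ℝ} (hδ : 0 < δ) :
    ∃ y ∈ G ∩ {x | ∀ k, k₀ ≤ k → x ∈ Xs k}, d N x y < 2 * δ := by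
  obtain ⟨z, ⟨hzG, hzN⟩, hxz⟩ := hGdense N hN x hx δ hδ
  obtain ⟨r, hr, hball⟩ := hGopen z hzG
  obtain ⟨y, hyI, hzy⟩ := hXinfDense N hN z hzN (min r δ) (lt_min hr hδ)
  have hyG : y ∈ G := hball y (hyI k₀ le_rfl) <|
    (dist_le_of_le hnested hmono le_rfl hN hzN (hyI N hN)).trans_lt (hzy.trans_le (min_le_left _ _))
  refine ⟨y, ⟨hyG, hyI⟩, ?_⟩
  calc d N x y ≤ d N x z + d N z y := htri N hN x hx z hzN y (hyI N hN)
    _ < δ + δ := add_lt_add hxz (hzy.trans_le (min_le_right _ _))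
    _ = 2 * δ := by ring

variable (hnonneg : ∀ k, k₀ ≤ k → ∀ x ∈ Xs k, ∀ y ∈ Xs k, 0 ≤ d k x y)
  {x y : X} (hx : ∀ k, k₀ ≤ k → x ∈ Xs k) (hy : ∀ k, k₀ ≤ k → y ∈ Xs k)
include hnonneg hx hy

lemma boundedDist_nonneg (k : ℕ) : 0 ≤ boundedDist k₀ d x y k := by
  unfold boundedDist
  split_ifs with hk
  · have := hnonneg k hk x (hx k hk) y (hy k hk)
    positivity
  · exact le_rfl

lemma boundedDist_le_one (k : ℕ) : boundedDist k₀ d x y k ≤ 1 := by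
  unfold boundedDist
  split_ifs with hk
  · exact div_one_add_self_le_one (hnonneg k hk x (hx k hk) y (hy k hk))
  · exact zero_le_one

lemma dist_lt_of_tsum_lt {ε : ℝ} (hε : 0 < ε)
    (h : ∑' k, (2 : ℝ)⁻¹ ^ k * boundedDist k₀ d x y k < 2⁻¹ ^ k₀ * (ε / (1 + ε))) :
    d k₀ x y < ε := by
  have hle := inv_two_pow_mul_le_tsum (boundedDist_nonneg hnonneg hx hy)
    (boundedDist_le_one hnonneg hx hy) k₀
  rw [boundedDist, if_pos le_rfl] at hle
  rw [← div_one_add_self_lt_div_one_add_self_iff (hnonneg k₀ le_rfl x (hx k₀ le_rfl) y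
    (hy k₀ le_rfl)) hε.le]
  exact lt_of_mul_lt_mul_left (hle.trans_lt h) (by positivity)

lemma tsum_le_two_mul_dist_add (hnested : ∀ k, k₀ ≤ k → Xs (k + 1) ⊆ Xs k)
    (hmono : ∀ k, k₀ ≤ k → ∀ x ∈ Xs (k + 1), ∀ y ∈ Xs (k + 1), d k x y ≤ d (k + 1) x y)
    {N : ℕ} (hN : k₀ ≤ N) :
    ∑' k, (2 : ℝ)⁻¹ ^ k * boundedDist k₀ d x y k ≤ 2 * d N x y + 2 * 2⁻¹ ^ N := by
  refine tsum_inv_two_pow_mul_le (boundedDist_nonneg hnonneg hx hy)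
    (boundedDist_le_one hnonneg hx hy) (hnonneg N hN x (hx N hN) y (hy N hN)) fun k hk => ?_
  unfold boundedDist
  split_ifs with hk₀
  · exact (div_one_add_self_le_self (hnonneg k hk₀ x (hx k hk₀) y (hy k hk₀))).trans
      (dist_le_of_le hnested hmono hk₀ hk.le (hx N hN) (hy N hN))
  · exact hnonneg N hN x (hx N hN) y (hy N hN)

end NestedMetric

theorem nested_metric_open_dense_general {X : Type*} (k₀ : ℕ) (Xs : ℕ → Set X)
    (d : ℕ → X → X → ℝ) (G : Set X)
    (hnested : ∀ k, k₀ ≤ k → Xs (k + 1) ⊆ Xs k)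
    (htri : ∀ k, k₀ ≤ k → ∀ x ∈ Xs k, ∀ y ∈ Xs k, ∀ z ∈ Xs k,
      d k x z ≤ d k x y + d k y z)
    (hnonneg : ∀ k, k₀ ≤ k → ∀ x ∈ Xs k, ∀ y ∈ Xs k, 0 ≤ d k x y)
    (hmono : ∀ k, k₀ ≤ k → ∀ x ∈ Xs (k + 1), ∀ y ∈ Xs (k + 1), d k x y ≤ d (k + 1) x y)
    (hXinfDense : ∀ k, k₀ ≤ k → ∀ x ∈ Xs k, ∀ ε : ℝ, 0 < ε →
      ∃ y ∈ {x | ∀ j, k₀ ≤ j → x ∈ Xs j}, d k x y < ε)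
    (hGopen : ∀ x ∈ G, ∃ ε : ℝ, 0 < ε ∧ ∀ y ∈ Xs k₀, d k₀ x y < ε → y ∈ G)
    (hGdense : ∀ k, k₀ ≤ k → ∀ x ∈ Xs k, ∀ ε : ℝ, 0 < ε →
      ∃ y ∈ G ∩ Xs k, d k x y < ε) :
    let Xinf : Set X := {x | ∀ k, k₀ ≤ k → x ∈ Xs k}
    let dinf : X → X → ℝ := fun x y =>
      ∑' k : ℕ, if k₀ ≤ k then (2 : ℝ)⁻¹ ^ k * (d k x y / (1 + d k x y)) else 0
    (∀ x ∈ G ∩ Xinf, ∃ ε : ℝ, 0 < ε ∧ ∀ y ∈ Xinf, dinf x y < ε → y ∈ G ∩ Xinf) ∧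
      (∀ x ∈ Xinf, ∀ ε : ℝ, 0 < ε → ∃ y ∈ G ∩ Xinf, dinf x y < ε) := by
  intro Xinf dinf
  have hdinf : ∀ x y, dinf x y = ∑' k, (2 : ℝ)⁻¹ ^ k * boundedDist k₀ d x y k := by
    simp only [dinf, boundedDist, mul_ite, mul_zero, implies_true]
  constructor
  · rintro x ⟨hxG, hxI⟩
    obtain ⟨ε, hε, hball⟩ := hGopen x hxG
    refine ⟨2⁻¹ ^ k₀ * (ε / (1 + ε)), by positivity, fun y hyI hxy => ⟨?_, hyI⟩⟩
    rw [hdinf] at hxy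
    exact hball y (hyI k₀ le_rfl) (dist_lt_of_tsum_lt hnonneg hxI hyI hε hxy)
  · intro x hxI ε hε
    obtain ⟨N, hNε, hN⟩ : ∃ N, (2 : ℝ)⁻¹ ^ N < ε / 4 ∧ k₀ ≤ N :=
      (((tendsto_pow_atTop_nhds_zero_of_lt_one (by norm_num) (by norm_num)).eventually
        (gt_mem_nhds (by positivity))).and (Filter.eventually_ge_atTop k₀)).exists
    obtain ⟨y, hyGI, hxy⟩ := exists_mem_inter_dist_lt hnested htri hmono hXinfDense hGopen
      hGdense hN (hxI N hN) (by positivity : 0 < ε / 8)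
    refine ⟨y, hyGI, ?_⟩
    calc dinf x y ≤ 2 * d N x y + 2 * 2⁻¹ ^ N :=
          hdinf x y ▸ tsum_le_two_mul_dist_add hnonneg hxI hyGI.2 hnested hmono hN
      _ < ε := by linarith

/-- Nested metric spaces, open/dense version: in the setting of the nested family
`(Xs k, d k)` (`k ≥ k₀`) of complete metric spaces with `d k ≤ d (k+1)` on `Xs (k+1)`,
suppose `X∞ = ⋂_{k ≥ k₀} Xs k` is dense in each `(Xs k, d k)`, and `G ⊆ Xs k₀` is open
in `(Xs k₀, d k₀)` with `G ∩ Xs k` dense in `(Xs k, d k)` for every `k ≥ k₀`.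
Then `G ∩ X∞` is open and dense in `(X∞, d∞)`, where
`d∞(x,y) = Σ_{k ≥ k₀} 2^{-k} d_k(x,y)/(1 + d_k(x,y))`. -/
theorem nested_metric_open_dense {X : Type*} (k₀ : ℕ) (Xs : ℕ → Set X)
    (d : ℕ → X → X → ℝ) (G : Set X)
    (hnested : ∀ k, k₀ ≤ k → Xs (k + 1) ⊆ Xs k)
    (hzero : ∀ k, k₀ ≤ k → ∀ x ∈ Xs k, ∀ y ∈ Xs k, (d k x y = 0 ↔ x = y))
    (hsymm : ∀ k, k₀ ≤ k → ∀ x ∈ Xs k, ∀ y ∈ Xs k, d k x y = d k y x)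
    (htri : ∀ k, k₀ ≤ k → ∀ x ∈ Xs k, ∀ y ∈ Xs k, ∀ z ∈ Xs k,
      d k x z ≤ d k x y + d k y z)
    (hnonneg : ∀ k, k₀ ≤ k → ∀ x ∈ Xs k, ∀ y ∈ Xs k, 0 ≤ d k x y)
    (hcomplete : ∀ k, k₀ ≤ k → ∀ u : ℕ → X, (∀ m, u m ∈ Xs k) →
      (∀ ε : ℝ, 0 < ε → ∃ N, ∀ m n, N ≤ m → N ≤ n → d k (u m) (u n) < ε) →
      ∃ x ∈ Xs k, ∀ ε : ℝ, 0 < ε → ∃ N, ∀ m, N ≤ m → d k (u m) x < ε)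
    (hmono : ∀ k, k₀ ≤ k → ∀ x ∈ Xs (k + 1), ∀ y ∈ Xs (k + 1), d k x y ≤ d (k + 1) x y)
    (hXinfDense : ∀ k, k₀ ≤ k → ∀ x ∈ Xs k, ∀ ε : ℝ, 0 < ε →
      ∃ y ∈ {x | ∀ j, k₀ ≤ j → x ∈ Xs j}, d k x y < ε)
    (hGsub : G ⊆ Xs k₀)
    (hGopen : ∀ x ∈ G, ∃ ε : ℝ, 0 < ε ∧ ∀ y ∈ Xs k₀, d k₀ x y < ε → y ∈ G)
    (hGdense : ∀ k, k₀ ≤ k → ∀ x ∈ Xs k, ∀ ε : ℝ, 0 < ε →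
      ∃ y ∈ G ∩ Xs k, d k x y < ε) :
    let Xinf : Set X := {x | ∀ k, k₀ ≤ k → x ∈ Xs k}
    let dinf : X → X → ℝ := fun x y =>
      ∑' k : ℕ, if k₀ ≤ k then (2 : ℝ)⁻¹ ^ k * (d k x y / (1 + d k x y)) else 0
    (∀ x ∈ G ∩ Xinf, ∃ ε : ℝ, 0 < ε ∧ ∀ y ∈ Xinf, dinf x y < ε → y ∈ G ∩ Xinf) ∧
      (∀ x ∈ Xinf, ∀ ε : ℝ, 0 < ε → ∃ y ∈ G ∩ Xinf, dinf x y < ε) :=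
  nested_metric_open_dense_general k₀ Xs d G hnested htri hnonneg hmono hXinfDense hGopen hGdense
end

section
/- In the nested-metric-space setting, suppose in addition that X_∞ is dense in (X_k, d_k) for every k ≥ k₀, and that G ⊆ X_{k₀} is a countable intersection of open subsets of the metric space (X_{k₀}, d_{k₀}) (a G_δ set) such that G ∩ X_k is dense in (X_k, d_k) for every k ≥ k₀. Then G ∩ X_∞ is a dense G_δ subset of the metric space (X_∞, d_∞), i.e. it is dense and is a countable intersection of open subsets of (X_∞, d_∞). -/
set_option maxHeartbeats 1000000 in
/-- Nested metric spaces, `G_δ` version: in the setting of the nested family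
`(Xs k, d k)` (`k ≥ k₀`) of complete metric spaces with `d k ≤ d (k+1)` on `Xs (k+1)`,
suppose `X∞ = ⋂_{k ≥ k₀} Xs k` is dense in each `(Xs k, d k)`, and `G ⊆ Xs k₀` is a
countable intersection of open subsets of `(Xs k₀, d k₀)` with `G ∩ Xs k` dense in
`(Xs k, d k)` for every `k ≥ k₀`. Then `G ∩ X∞` is dense in `(X∞, d∞)` and is a
countable intersection of open subsets of `(X∞, d∞)`. -/
theorem nested_metric_Gdelta_dense {X : Type*} (k₀ : ℕ) (Xs : ℕ → Set X)
    (d : ℕ → X → X → ℝ) (G : Set X)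
    (hnested : ∀ k, k₀ ≤ k → Xs (k + 1) ⊆ Xs k)
    (hzero : ∀ k, k₀ ≤ k → ∀ x ∈ Xs k, ∀ y ∈ Xs k, (d k x y = 0 ↔ x = y))
    (hsymm : ∀ k, k₀ ≤ k → ∀ x ∈ Xs k, ∀ y ∈ Xs k, d k x y = d k y x)
    (htri : ∀ k, k₀ ≤ k → ∀ x ∈ Xs k, ∀ y ∈ Xs k, ∀ z ∈ Xs k,
      d k x z ≤ d k x y + d k y z)
    (hnonneg : ∀ k, k₀ ≤ k → ∀ x ∈ Xs k, ∀ y ∈ Xs k, 0 ≤ d k x y)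
    (hcomplete : ∀ k, k₀ ≤ k → ∀ u : ℕ → X, (∀ m, u m ∈ Xs k) →
      (∀ ε : ℝ, 0 < ε → ∃ N, ∀ m n, N ≤ m → N ≤ n → d k (u m) (u n) < ε) →
      ∃ x ∈ Xs k, ∀ ε : ℝ, 0 < ε → ∃ N, ∀ m, N ≤ m → d k (u m) x < ε)
    (hmono : ∀ k, k₀ ≤ k → ∀ x ∈ Xs (k + 1), ∀ y ∈ Xs (k + 1), d k x y ≤ d (k + 1) x y)
    (hXinfDense : ∀ k, k₀ ≤ k → ∀ x ∈ Xs k, ∀ ε : ℝ, 0 < ε →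
      ∃ y ∈ {x | ∀ j, k₀ ≤ j → x ∈ Xs j}, d k x y < ε)
    (hGsub : G ⊆ Xs k₀)
    (hGdelta : ∃ Gs : ℕ → Set X,
      (∀ i, Gs i ⊆ Xs k₀ ∧
        ∀ x ∈ Gs i, ∃ ε : ℝ, 0 < ε ∧ ∀ y ∈ Xs k₀, d k₀ x y < ε → y ∈ Gs i) ∧
      G = ⋂ i, Gs i)
    (hGdense : ∀ k, k₀ ≤ k → ∀ x ∈ Xs k, ∀ ε : ℝ, 0 < ε →
      ∃ y ∈ G ∩ Xs k, d k x y < ε) :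
    let Xinf : Set X := {x | ∀ k, k₀ ≤ k → x ∈ Xs k}
    let dinf : X → X → ℝ := fun x y =>
      ∑' k : ℕ, if k₀ ≤ k then (2 : ℝ)⁻¹ ^ k * (d k x y / (1 + d k x y)) else 0
    (∀ x ∈ Xinf, ∀ ε : ℝ, 0 < ε → ∃ y ∈ G ∩ Xinf, dinf x y < ε) ∧
      (∃ Hs : ℕ → Set X,
        (∀ i, Hs i ⊆ Xinf ∧
          ∀ x ∈ Hs i, ∃ ε : ℝ, 0 < ε ∧ ∀ y ∈ Xinf, dinf x y < ε → y ∈ Hs i) ∧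
        G ∩ Xinf = ⋂ i, Hs i) := by
  intro Xinf dinf
  obtain ⟨Gs, hGs, hGeq⟩ := hGdelta
  -- chained nesting and monotonicity
  have hchain : ∀ j, k₀ ≤ j → ∀ j', j ≤ j' →
      (Xs j' ⊆ Xs j) ∧ (∀ a ∈ Xs j', ∀ b ∈ Xs j', d j a b ≤ d j' a b) := by
    intro j hj j' hjj'
    induction j', hjj' using Nat.le_induction with
    | base => exact ⟨fun _ h => h, fun a _ b _ => le_rfl⟩
    | succ m hm ih =>
      have hsub := hnested m (hj.trans hm)
      refine ⟨fun z hz => ih.1 (hsub hz), fun a ha b hb => ?_⟩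
      exact (ih.2 a (hsub ha) b (hsub hb)).trans (hmono m (hj.trans hm) a ha b hb)
  have hXsub : ∀ k, k₀ ≤ k → Xinf ⊆ Xs k := fun k hk z hz => hz k hk
  -- bounds on terms of dinf and summability
  have hterm : ∀ a ∈ Xinf, ∀ b ∈ Xinf, ∀ k : ℕ,
      0 ≤ (if k₀ ≤ k then (2 : ℝ)⁻¹ ^ k * (d k a b / (1 + d k a b)) else 0) ∧
      (if k₀ ≤ k then (2 : ℝ)⁻¹ ^ k * (d k a b / (1 + d k a b)) else 0) ≤ (2 : ℝ)⁻¹ ^ k := by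
    intro a ha b hb k
    by_cases hk : k₀ ≤ k
    · have hd0 : 0 ≤ d k a b := hnonneg k hk a (ha k hk) b (hb k hk)
      have h1d : (0:ℝ) < 1 + d k a b := by linarith
      have hq0 : 0 ≤ d k a b / (1 + d k a b) := div_nonneg hd0 h1d.le
      have hq1 : d k a b / (1 + d k a b) ≤ 1 := by
        rw [div_le_one h1d]; linarith
      have hp : (0:ℝ) ≤ (2 : ℝ)⁻¹ ^ k := by positivity
      simp only [if_pos hk]
      constructor
      · positivity
      · calc (2 : ℝ)⁻¹ ^ k * (d k a b / (1 + d k a b)) ≤ (2 : ℝ)⁻¹ ^ k * 1 :=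
            mul_le_mul_of_nonneg_left hq1 hp
          _ = (2 : ℝ)⁻¹ ^ k := mul_one _
    · simp only [if_neg hk]
      exact ⟨le_rfl, by positivity⟩
  have hgeo : Summable (fun k : ℕ => (2 : ℝ)⁻¹ ^ k) :=
    summable_geometric_of_lt_one (by norm_num) (by norm_num)
  have hsum : ∀ a ∈ Xinf, ∀ b ∈ Xinf, Summable
      (fun k : ℕ => if k₀ ≤ k then (2 : ℝ)⁻¹ ^ k * (d k a b / (1 + d k a b)) else 0) :=
    fun a ha b hb => Summable.of_nonneg_of_le (fun k => (hterm a ha b hb k).1)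
      (fun k => (hterm a ha b hb k).2) hgeo
  constructor
  · -- density part
    intro x hx ε hε
    obtain ⟨K0, hK0⟩ := exists_pow_lt_of_lt_one (show (0:ℝ) < ε/2 by linarith)
      (show (2:ℝ)⁻¹ < 1 by norm_num)
    set K := max K0 k₀ with hKdef
    have hKk₀ : k₀ ≤ K := le_max_right _ _
    have hKε : (2:ℝ)⁻¹ ^ K < ε/2 :=
      lt_of_le_of_lt (pow_le_pow_of_le_one (by norm_num) (by norm_num) (le_max_left _ _)) hK0
    set r0 : ℝ := ε / (4 * (K + 1)) with hr0def
    have hr0pos : 0 < r0 := by positivity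
    -- finitely many of the Gs i contain a common ball around each point of G
    have hopen : ∀ N : ℕ, ∀ u ∈ G, ∃ e : ℝ, 0 < e ∧
        ∀ i ≤ N, ∀ z ∈ Xs k₀, d k₀ u z < e → z ∈ Gs i := by
      intro N
      induction N with
      | zero =>
        intro u hu
        obtain ⟨e, he, hb⟩ := (hGs 0).2 u (by rw [hGeq] at hu; exact Set.mem_iInter.1 hu 0)
        refine ⟨e, he, fun i hi z hz hdz => ?_⟩
        obtain rfl : i = 0 := Nat.le_zero.mp hi
        exact hb z hz hdz
      | succ N ih =>
        intro u hu
        obtain ⟨e1, he1, hb1⟩ := ih u hu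
        obtain ⟨e2, he2, hb2⟩ := (hGs (N+1)).2 u
          (by rw [hGeq] at hu; exact Set.mem_iInter.1 hu (N+1))
        refine ⟨min e1 e2, lt_min he1 he2, fun i hi z hz hdz => ?_⟩
        rcases Nat.lt_or_ge i (N+1) with h | h
        · exact hb1 i (Nat.lt_succ_iff.1 h) z hz (hdz.trans_le (min_le_left _ _))
        · obtain rfl : i = N + 1 := le_antisymm hi h
          exact hb2 z hz (hdz.trans_le (min_le_right _ _))
    -- one step of the construction
    have hstep : ∀ n : ℕ, ∀ v ∈ Xinf, ∀ r : ℝ, 0 < r → ∃ v' ∈ Xinf, ∃ r' : ℝ, 0 < r' ∧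
        r' ≤ r/4 ∧ (∀ j, k₀ ≤ j → j ≤ K + n → d j v v' < r/2) ∧
        (∀ i ≤ n, ∀ z ∈ Xs k₀, d k₀ v' z < r' → z ∈ Gs i) := by
      intro n v hv r hr
      have hk : k₀ ≤ K + n := hKk₀.trans (Nat.le_add_right _ _)
      obtain ⟨u, ⟨huG, huk⟩, hdu⟩ := hGdense (K+n) hk v (hv _ hk) (r/4) (by linarith)
      obtain ⟨e, he, hball⟩ := hopen n u huG
      obtain ⟨v', hv', hdv'⟩ := hXinfDense (K+n) hk u huk (min (r/4) (e/2))
        (lt_min (by linarith) (by linarith))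
      refine ⟨v', hv', min (r/4) (e/2), lt_min (by linarith) (by linarith),
        min_le_left _ _, ?_, ?_⟩
      · intro j hj hjK
        have hc := hchain j hj (K+n) hjK
        have h1 : d j v v' ≤ d j v u + d j u v' :=
          htri j hj v (hc.1 (hv _ hk)) u (hc.1 huk) v' (hc.1 (hv' _ hk))
        have h2 : d j v u ≤ d (K+n) v u := hc.2 _ (hv _ hk) _ huk
        have h3 : d j u v' ≤ d (K+n) u v' := hc.2 _ huk _ (hv' _ hk)
        have h4 : min (r/4) (e/2) ≤ r/4 := min_le_left _ _
        linarith
      · intro i hi z hz hdz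
        have hc := hchain k₀ le_rfl (K+n) hk
        have hduv' : d k₀ u v' ≤ d (K+n) u v' := hc.2 _ huk _ (hv' _ hk)
        have h1 : d k₀ u z ≤ d k₀ u v' + d k₀ v' z :=
          htri k₀ le_rfl u (hc.1 huk) v' (hv' _ le_rfl) z hz
        apply hball i hi z hz
        have h4 : min (r/4) (e/2) ≤ e/2 := min_le_right _ _
        linarith
    -- recursive construction of the sequence
    have hrec : ∀ n : ℕ, ∀ p : {q : X × ℝ // q.1 ∈ Xinf ∧ 0 < q.2},
        ∃ p' : {q : X × ℝ // q.1 ∈ Xinf ∧ 0 < q.2},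
          p'.1.2 ≤ p.1.2/4 ∧ (∀ j, k₀ ≤ j → j ≤ K + n → d j p.1.1 p'.1.1 < p.1.2/2) ∧
          (∀ i ≤ n, ∀ z ∈ Xs k₀, d k₀ p'.1.1 z < p'.1.2 → z ∈ Gs i) := by
      rintro n ⟨⟨vv, rr⟩, hvv, hrr⟩
      obtain ⟨v', hv', r', hr', h4, hdd, hG'⟩ := hstep n vv hvv rr hrr
      exact ⟨⟨(v', r'), hv', hr'⟩, h4, hdd, hG'⟩
    choose F hF using hrec
    let seq : ℕ → {q : X × ℝ // q.1 ∈ Xinf ∧ 0 < q.2} :=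
      fun n => Nat.rec ⟨(x, r0), hx, hr0pos⟩ F n
    set v : ℕ → X := fun n => (seq n).1.1 with hvdef
    set r : ℕ → ℝ := fun n => (seq n).1.2 with hrdef
    have hv0 : v 0 = x := rfl
    have hr0' : r 0 = r0 := rfl
    have hvmem : ∀ n, v n ∈ Xinf := fun n => (seq n).2.1
    have hrpos : ∀ n, 0 < r n := fun n => (seq n).2.2
    have hspec : ∀ n, r (n+1) ≤ r n / 4 ∧
        (∀ j, k₀ ≤ j → j ≤ K + n → d j (v n) (v (n+1)) < r n / 2) ∧
        (∀ i ≤ n, ∀ z ∈ Xs k₀, d k₀ (v (n+1)) z < r (n+1) → z ∈ Gs i) :=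
      fun n => hF n (seq n)
    -- geometric decay of the radii
    have hrle : ∀ n, r n ≤ r0 * (2:ℝ)⁻¹ ^ n := by
      intro n
      induction n with
      | zero => simp [hr0']
      | succ n ih =>
        have h1 := (hspec n).1
        have h2 : (0:ℝ) ≤ r0 * (2:ℝ)⁻¹ ^ n := by positivity
        calc r (n+1) ≤ r n / 4 := h1
          _ ≤ (r0 * (2:ℝ)⁻¹ ^ n) / 4 := by linarith
          _ ≤ r0 * (2:ℝ)⁻¹ ^ (n+1) := by rw [pow_succ]; nlinarith
    -- distance bound along the sequence
    have hbound : ∀ n j, k₀ ≤ j → j ≤ K + n → ∀ m, n ≤ m →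
        d j (v n) (v m) ≤ (2/3) * (r n - r m) := by
      intro n j hj hjn m hm
      induction m, hm using Nat.le_induction with
      | base =>
        rw [(hzero j hj _ (hvmem n j hj) _ (hvmem n j hj)).mpr rfl]
        linarith
      | succ m hm ih =>
        have h1 : d j (v n) (v (m+1)) ≤ d j (v n) (v m) + d j (v m) (v (m+1)) :=
          htri j hj _ (hvmem n j hj) _ (hvmem m j hj) _ (hvmem (m+1) j hj)
        have h2 : d j (v m) (v (m+1)) < r m / 2 := (hspec m).2.1 j hj (by omega)
        have h3 := (hspec m).1
        linarith
    -- limits at each level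
    have hlimit : ∀ j, k₀ ≤ j → ∃ y ∈ Xs j, ∀ δ : ℝ, 0 < δ → ∃ N, ∀ m, N ≤ m →
        d j (v m) y < δ := by
      intro j hj
      apply hcomplete j hj v (fun m => hvmem m j hj)
      intro δ hδ
      obtain ⟨M, hM⟩ := exists_pow_lt_of_lt_one (show (0:ℝ) < δ/r0 by positivity)
        (show (2:ℝ)⁻¹ < 1 by norm_num)
      have hsmall : ∀ a, max M (j - K) ≤ a → r a < δ := by
        intro a ha
        have h1 : r a ≤ r0 * (2:ℝ)⁻¹ ^ a := hrle a
        have h2 : (2:ℝ)⁻¹ ^ a ≤ (2:ℝ)⁻¹ ^ M :=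
          pow_le_pow_of_le_one (by norm_num) (by norm_num) (le_trans (le_max_left _ _) ha)
        have h3 : r0 * (2:ℝ)⁻¹ ^ M < δ := by
          rw [mul_comm]
          exact (lt_div_iff₀ hr0pos).mp hM
        nlinarith [pow_nonneg (show (0:ℝ) ≤ 2⁻¹ by norm_num) a, hr0pos]
      have hKj : ∀ a, max M (j - K) ≤ a → j ≤ K + a := by intro a ha; omega
      refine ⟨max M (j - K), fun m n hm hn => ?_⟩
      rcases le_total m n with h | h
      · have := hbound m j hj (hKj m hm) n h
        have := hrpos n
        have := hsmall m hm
        linarith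
      · rw [hsymm j hj _ (hvmem m j hj) _ (hvmem n j hj)]
        have := hbound n j hj (hKj n hn) m h
        have := hrpos m
        have := hsmall n hn
        linarith
    choose yy hyXs hylim using hlimit
    set Y : X := yy k₀ le_rfl with hYdef
    have heq : ∀ j (hj : k₀ ≤ j), yy j hj = Y := by
      intro j hj
      have hc := hchain k₀ le_rfl j hj
      have hyj : yy j hj ∈ Xs k₀ := hc.1 (hyXs j hj)
      have hy0 : Y ∈ Xs k₀ := hyXs k₀ le_rfl
      have key : ∀ δ : ℝ, 0 < δ → d k₀ Y (yy j hj) < δ := by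
        intro δ hδ
        obtain ⟨N1, h1⟩ := hylim k₀ le_rfl (δ/2) (by linarith)
        obtain ⟨N2, h2⟩ := hylim j hj (δ/2) (by linarith)
        set m := max N1 N2 with hm
        have ha : d k₀ (v m) Y < δ/2 := h1 m (le_max_left _ _)
        have hb : d k₀ (v m) (yy j hj) ≤ d j (v m) (yy j hj) :=
          hc.2 _ (hvmem m j hj) _ (hyXs j hj)
        have hb2 : d j (v m) (yy j hj) < δ/2 := h2 m (le_max_right _ _)
        have htr : d k₀ Y (yy j hj) ≤ d k₀ Y (v m) + d k₀ (v m) (yy j hj) :=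
          htri k₀ le_rfl Y hy0 (v m) (hvmem m k₀ le_rfl) (yy j hj) hyj
        have hsy : d k₀ Y (v m) = d k₀ (v m) Y :=
          hsymm k₀ le_rfl Y hy0 (v m) (hvmem m k₀ le_rfl)
        linarith
      have h0 : d k₀ Y (yy j hj) = 0 := by
        have hnn := hnonneg k₀ le_rfl Y hy0 (yy j hj) hyj
        by_contra h
        have hpos : 0 < d k₀ Y (yy j hj) := lt_of_le_of_ne hnn (Ne.symm h)
        exact absurd (key _ hpos) (lt_irrefl _)
      exact ((hzero k₀ le_rfl Y hy0 (yy j hj) hyj).mp h0).symm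
    have hYinf : Y ∈ Xinf := fun j hj => heq j hj ▸ hyXs j hj
    have hylim' : ∀ j, k₀ ≤ j → ∀ δ : ℝ, 0 < δ → ∃ N, ∀ m, N ≤ m → d j (v m) Y < δ := by
      intro j hj
      have := hylim j hj
      rwa [heq j hj] at this
    -- distance from v n to the limit
    have hdY : ∀ n j, k₀ ≤ j → j ≤ K + n → d j (v n) Y < r n := by
      intro n j hj hjn
      obtain ⟨N, hN⟩ := hylim' j hj (r n / 4) (by linarith [hrpos n])
      set m := max N n with hm
      have h1 : d j (v n) (v m) ≤ (2/3) * (r n - r m) :=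
        hbound n j hj hjn m (le_max_right _ _)
      have h2 : d j (v m) Y < r n / 4 := hN m (le_max_left _ _)
      have h3 : d j (v n) Y ≤ d j (v n) (v m) + d j (v m) Y :=
        htri j hj _ (hvmem n j hj) _ (hvmem m j hj) _ (hYinf j hj)
      have := hrpos m
      have := hrpos n
      linarith
    have hYG : Y ∈ G := by
      rw [hGeq]
      refine Set.mem_iInter.2 fun i => ?_
      exact (hspec i).2.2 i le_rfl Y (hYinf k₀ le_rfl)
        (hdY (i+1) k₀ le_rfl (by omega))
    refine ⟨Y, ⟨hYG, hYinf⟩, ?_⟩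
    -- final estimate on dinf x Y
    have hsumxY := hsum x hx Y hYinf
    have hsplit := Summable.sum_add_tsum_nat_add (f := fun k : ℕ =>
      if k₀ ≤ k then (2 : ℝ)⁻¹ ^ k * (d k x Y / (1 + d k x Y)) else 0) (K+1) hsumxY
    have hhead : (∑ k ∈ Finset.range (K+1),
        if k₀ ≤ k then (2 : ℝ)⁻¹ ^ k * (d k x Y / (1 + d k x Y)) else 0) ≤ ε/4 := by
      have hone : ∀ k ∈ Finset.range (K+1),
          (if k₀ ≤ k then (2 : ℝ)⁻¹ ^ k * (d k x Y / (1 + d k x Y)) else 0) ≤ r0 := by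
        intro k hk
        by_cases hkk : k₀ ≤ k
        · rw [if_pos hkk]
          have hdk : d k (v 0) Y < r 0 := hdY 0 k hkk (by
            have := Finset.mem_range.mp hk; omega)
          rw [hv0, hr0'] at hdk
          have hd0 : 0 ≤ d k x Y := hnonneg k hkk x (hx k hkk) Y (hYinf k hkk)
          have h1 : d k x Y / (1 + d k x Y) ≤ d k x Y := div_le_self hd0 (by linarith)
          have h2 : (2 : ℝ)⁻¹ ^ k * (d k x Y / (1 + d k x Y)) ≤ d k x Y / (1 + d k x Y) := by
            apply mul_le_of_le_one_left (div_nonneg hd0 (by linarith))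
            exact pow_le_one₀ (by norm_num) (by norm_num)
          linarith
        · rw [if_neg hkk]; linarith
      calc (∑ k ∈ Finset.range (K+1),
            if k₀ ≤ k then (2 : ℝ)⁻¹ ^ k * (d k x Y / (1 + d k x Y)) else 0)
          ≤ ∑ _k ∈ Finset.range (K+1), r0 := Finset.sum_le_sum hone
        _ = (K+1 : ℕ) * r0 := by rw [Finset.sum_const, Finset.card_range, nsmul_eq_mul]
        _ = ε/4 := by
            rw [hr0def]
            push_cast
            field_simp
    have htail : (∑' i : ℕ, if k₀ ≤ i + (K+1) then
        (2 : ℝ)⁻¹ ^ (i + (K+1)) * (d (i + (K+1)) x Y / (1 + d (i + (K+1)) x Y)) else 0)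
        ≤ (2:ℝ)⁻¹ ^ K := by
      have hs1 : Summable (fun i : ℕ => if k₀ ≤ i + (K+1) then
          (2 : ℝ)⁻¹ ^ (i + (K+1)) * (d (i + (K+1)) x Y / (1 + d (i + (K+1)) x Y)) else 0) :=
        (summable_nat_add_iff (K+1)).2 hsumxY
      have hs2 : Summable (fun i : ℕ => (2:ℝ)⁻¹ ^ (i + (K+1))) :=
        (summable_nat_add_iff (K+1)).2 hgeo
      have h1 := Summable.tsum_le_tsum (fun i => (hterm x hx Y hYinf (i + (K+1))).2) hs1 hs2
      have h2 : (∑' i : ℕ, (2:ℝ)⁻¹ ^ (i + (K+1))) = (2:ℝ)⁻¹ ^ K := by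
        have : (fun i : ℕ => (2:ℝ)⁻¹ ^ (i + (K+1))) =
            (fun i : ℕ => (2:ℝ)⁻¹ ^ i * (2:ℝ)⁻¹ ^ (K+1)) := by
          funext i; rw [pow_add]
        rw [this, tsum_mul_right, tsum_geometric_of_lt_one (by norm_num) (by norm_num)]
        rw [pow_succ]
        norm_num
        ring
      linarith [h1, h2.le]
    show (∑' k : ℕ, if k₀ ≤ k then (2 : ℝ)⁻¹ ^ k * (d k x Y / (1 + d k x Y)) else 0) < ε
    rw [← hsplit]
    have : (2:ℝ)⁻¹ ^ K < ε/2 := hKε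
    linarith
  · -- Gδ part
    refine ⟨fun i => Gs i ∩ Xinf, fun i => ⟨fun z hz => hz.2, ?_⟩, ?_⟩
    · intro a ⟨haG, haI⟩
      obtain ⟨δ, hδ, hball⟩ := (hGs i).2 a haG
      refine ⟨(2 : ℝ)⁻¹ ^ k₀ * (δ / (1 + δ)), by positivity, ?_⟩
      intro b hb hdab
      refine ⟨?_, hb⟩
      have hterm_le : (if k₀ ≤ k₀ then (2 : ℝ)⁻¹ ^ k₀ * (d k₀ a b / (1 + d k₀ a b)) else 0)
          ≤ dinf a b := Summable.le_tsum (hsum a haI b hb) k₀ (fun j _ => (hterm a haI b hb j).1)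
      rw [if_pos le_rfl] at hterm_le
      have hkey : (2 : ℝ)⁻¹ ^ k₀ * (d k₀ a b / (1 + d k₀ a b)) <
          (2 : ℝ)⁻¹ ^ k₀ * (δ / (1 + δ)) := lt_of_le_of_lt hterm_le hdab
      have hq : d k₀ a b / (1 + d k₀ a b) < δ / (1 + δ) :=
        lt_of_mul_lt_mul_left hkey (by positivity)
      have hd0 : 0 ≤ d k₀ a b := hnonneg k₀ le_rfl a (haI k₀ le_rfl) b (hb k₀ le_rfl)
      have hdab' : d k₀ a b < δ := by
        have h1 : (0:ℝ) < 1 + d k₀ a b := by linarith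
        have h2 : (0:ℝ) < 1 + δ := by linarith
        rw [div_lt_div_iff₀ h1 h2] at hq
        nlinarith
      exact hball b (hb k₀ le_rfl) hdab'
    · rw [hGeq, Set.iInter_inter]
end
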